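/- arXiv:1405.5864 — 5 statements merged into one kernel-verified Lean document; each statement's English description precedes it below -/
import Mathlib

section
/- Let m ≥ 1 and let P_r be a probability mass function on the file set {1,…,m} with P_r(f) > 0 for every f, and let K₀ ≥ 2 be an integer (the total number of cache slots, K₀ = M(g_c−1), held by the other users in a cluster). For f ∈ {1,…,m} set z_f = P_r(f)^{1/(K₀−1)}, and for a caching vector Q : {1,…,m} → [0,1] define the cache-hit objective Φ(Q) = ∑_{f=1}^m P_r(f)·(1 − (1 − Q(f))^{K₀}). Suppose ν ≥ 0 is such that P*(f) = max(1 − ν/z_f, 0) satisfies ∑_{f=1}^m P*(f) = 1. Then P* maximizes Φ over all probability mass functions on {1,…,m}: for every Q : {1,…,m} → [0,1] with ∑_{f=1}^m Q(f) = 1, one has Φ(Q) ≤ Φ(P*). -/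
open Finset

/-- Tangent-line inequality for the convex function `x ↦ x ^ K` on `[0, ∞)`. -/
lemma pow_tangent_ineq (K : ℕ) {a b : ℝ} (ha : 0 ≤ a) (hb : 0 ≤ b) :
    a ^ K - b ^ K ≤ (K : ℝ) * a ^ (K - 1) * (a - b) := by
  have hgs := geom_sum₂_mul a b K
  rcases le_total b a with h | h
  · have hsum : (∑ i ∈ Finset.range K, a ^ i * b ^ (K - 1 - i)) ≤ (K : ℝ) * a ^ (K - 1) := by
      calc (∑ i ∈ Finset.range K, a ^ i * b ^ (K - 1 - i))
          ≤ ∑ i ∈ Finset.range K, a ^ (K - 1) := by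
            apply Finset.sum_le_sum
            intro i hi
            calc a ^ i * b ^ (K - 1 - i) ≤ a ^ i * a ^ (K - 1 - i) := by
                  exact mul_le_mul_of_nonneg_left (pow_le_pow_left₀ hb h _) (pow_nonneg ha i)
              _ = a ^ (i + (K - 1 - i)) := (pow_add a i (K - 1 - i)).symm
              _ = a ^ (K - 1) := by
                  congr 1
                  have := Finset.mem_range.mp hi
                  omega
        _ = (K : ℝ) * a ^ (K - 1) := by
            rw [Finset.sum_const, Finset.card_range, nsmul_eq_mul]
    calc a ^ K - b ^ K = (∑ i ∈ Finset.range K, a ^ i * b ^ (K - 1 - i)) * (a - b) := hgs.symm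
      _ ≤ (K : ℝ) * a ^ (K - 1) * (a - b) :=
          mul_le_mul_of_nonneg_right hsum (by linarith)
  · have hsum : (K : ℝ) * a ^ (K - 1) ≤ ∑ i ∈ Finset.range K, a ^ i * b ^ (K - 1 - i) := by
      calc (K : ℝ) * a ^ (K - 1)
          = ∑ i ∈ Finset.range K, a ^ (K - 1) := by
            rw [Finset.sum_const, Finset.card_range, nsmul_eq_mul]
        _ ≤ ∑ i ∈ Finset.range K, a ^ i * b ^ (K - 1 - i) := by
            apply Finset.sum_le_sum
            intro i hi
            calc a ^ (K - 1) = a ^ (i + (K - 1 - i)) := by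
                  congr 1
                  have := Finset.mem_range.mp hi
                  omega
              _ = a ^ i * a ^ (K - 1 - i) := pow_add a i (K - 1 - i)
              _ ≤ a ^ i * b ^ (K - 1 - i) :=
                  mul_le_mul_of_nonneg_left (pow_le_pow_left₀ ha h _) (pow_nonneg ha i)
    calc a ^ K - b ^ K = (∑ i ∈ Finset.range K, a ^ i * b ^ (K - 1 - i)) * (a - b) := hgs.symm
      _ ≤ (K : ℝ) * a ^ (K - 1) * (a - b) := by
          have hab : a - b ≤ 0 := by linarith
          nlinarith [mul_le_mul_of_nonpos_right hsum hab]

/-- **Optimality of the water-filling caching distribution.**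
Let `Pr` be a pmf on `{1,…,m}` with positive mass everywhere, let `K₀ = M(g_c−1) ≥ 2` be the
total number of cache slots held by the other users in a cluster, and set
`z f = Pr f ^ (1/(K₀−1))`.  If `ν ≥ 0` is such that `P* f = max (1 − ν / z f) 0` sums to `1`,
then `P*` maximizes the cache-hit objective
`Φ(Q) = ∑ f, Pr f * (1 − (1 − Q f) ^ K₀)` over all pmfs `Q` on `{1,…,m}`. -/
theorem waterfilling_maximizes_cache_hit
    (m : ℕ) (hm : 1 ≤ m) (K₀ : ℕ) (hK₀ : 2 ≤ K₀)
    (Pr : Fin m → ℝ) (hPrpos : ∀ f, 0 < Pr f) (hPrsum : ∑ f, Pr f = 1)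
    (z : Fin m → ℝ) (hz : ∀ f, z f = Pr f ^ ((1 : ℝ) / ((K₀ : ℝ) - 1)))
    (ν : ℝ) (hν : 0 ≤ ν)
    (Pstar : Fin m → ℝ) (hPstar : ∀ f, Pstar f = max (1 - ν / z f) 0)
    (hPstarsum : ∑ f, Pstar f = 1) :
    ∀ Q : Fin m → ℝ, (∀ f, 0 ≤ Q f) → (∀ f, Q f ≤ 1) → (∑ f, Q f = 1) →
      ∑ f, Pr f * (1 - (1 - Q f) ^ K₀) ≤ ∑ f, Pr f * (1 - (1 - Pstar f) ^ K₀) := by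
  intro Q hQ0 hQ1 hQsum
  have hzpos : ∀ f, 0 < z f := fun f => by
    rw [hz]; exact Real.rpow_pos_of_pos (hPrpos f) _
  have hKcast : ((K₀ - 1 : ℕ) : ℝ) = (K₀ : ℝ) - 1 := by
    have : 1 ≤ K₀ := by omega
    push_cast [Nat.cast_sub this]; ring
  have hKne : (K₀ : ℝ) - 1 ≠ 0 := by
    have : (2 : ℝ) ≤ (K₀ : ℝ) := by exact_mod_cast hK₀
    linarith
  have hzpow : ∀ f, z f ^ (K₀ - 1) = Pr f := by
    intro f
    rw [hz, ← Real.rpow_natCast (Pr f ^ ((1 : ℝ) / ((K₀ : ℝ) - 1))) (K₀ - 1),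
      ← Real.rpow_mul (hPrpos f).le, hKcast]
    rw [one_div, inv_mul_cancel₀ hKne, Real.rpow_one]
  -- the gradient of Φ at Pstar, and the Lagrange multiplier
  set g : Fin m → ℝ := fun f => Pr f * (K₀ : ℝ) * (1 - Pstar f) ^ (K₀ - 1) with hg
  set lam : ℝ := (K₀ : ℝ) * ν ^ (K₀ - 1) with hlam
  have hP0 : ∀ f, 0 ≤ Pstar f := fun f => by rw [hPstar]; exact le_max_right _ _
  have hP1 : ∀ f, Pstar f ≤ 1 := fun f => by
    rw [hPstar]
    apply max_le _ zero_le_one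
    have : 0 ≤ ν / z f := div_nonneg hν (hzpos f).le
    linarith
  have hgrad : ∀ f, g f ≤ lam ∧ (Pstar f ≠ 0 → g f = lam) := by
    intro f
    rcases le_or_gt (ν / z f) 1 with h | h
    · -- interior (or boundary) case: Pstar f = 1 - ν / z f, gradient equals lam
      have hP : Pstar f = 1 - ν / z f := by
        rw [hPstar]; exact max_eq_left (by linarith)
      have heq : g f = lam := by
        simp only [hg, hlam]; rw [hP]
        have : (1 : ℝ) - (1 - ν / z f) = ν / z f := by ring
        rw [this, div_pow, div_eq_mul_inv]
        rw [mul_comm (Pr f) (K₀ : ℝ), mul_assoc, mul_comm (ν ^ (K₀ - 1)) ((z f ^ (K₀ - 1))⁻¹),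
          ← mul_assoc (Pr f)]
        rw [← hzpow f, mul_inv_cancel₀ (pow_ne_zero _ (hzpos f).ne'), one_mul]
      exact ⟨le_of_eq heq, fun _ => heq⟩
    · -- Pstar f = 0
      have hP : Pstar f = 0 := by
        rw [hPstar]; exact max_eq_right (by linarith)
      refine ⟨?_, fun hne => absurd hP hne⟩
      simp only [hg, hlam]; rw [hP]
      have hzν : z f ≤ ν := by
        have := (one_lt_div (hzpos f)).mp h
        linarith
      calc Pr f * (K₀ : ℝ) * (1 - 0) ^ (K₀ - 1) = (K₀ : ℝ) * z f ^ (K₀ - 1) := by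
            rw [← hzpow f]; ring
        _ ≤ (K₀ : ℝ) * ν ^ (K₀ - 1) := by
            apply mul_le_mul_of_nonneg_left (pow_le_pow_left₀ (hzpos f).le hzν _)
            positivity
  -- the gradient term sums to something ≤ 0
  have hgradsum : ∑ f, g f * (Q f - Pstar f) ≤ 0 := by
    have h1 : ∑ f, g f * Q f ≤ lam := by
      calc ∑ f, g f * Q f ≤ ∑ f, lam * Q f :=
            Finset.sum_le_sum fun f _ => mul_le_mul_of_nonneg_right (hgrad f).1 (hQ0 f)
        _ = lam := by rw [← Finset.mul_sum, hQsum, mul_one]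
    have h2 : ∑ f, g f * Pstar f = lam := by
      calc ∑ f, g f * Pstar f = ∑ f, lam * Pstar f := by
            apply Finset.sum_congr rfl
            intro f _
            by_cases hf : Pstar f = 0
            · rw [hf, mul_zero, mul_zero]
            · rw [(hgrad f).2 hf]
        _ = lam := by rw [← Finset.mul_sum, hPstarsum, mul_one]
    have : ∑ f, g f * (Q f - Pstar f) = (∑ f, g f * Q f) - ∑ f, g f * Pstar f := by
      rw [← Finset.sum_sub_distrib]
      apply Finset.sum_congr rfl
      intro f _; ring
    rw [this, h2]
    linarith
  -- combine via the tangent inequality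
  have hmain : ∀ f, Pr f * (1 - (1 - Q f) ^ K₀) - Pr f * (1 - (1 - Pstar f) ^ K₀)
      ≤ g f * (Q f - Pstar f) := by
    intro f
    have ha : 0 ≤ 1 - Pstar f := by linarith [hP1 f]
    have hb : 0 ≤ 1 - Q f := by linarith [hQ1 f]
    have htan := pow_tangent_ineq K₀ ha hb
    have hkey : (1 - Pstar f) ^ K₀ - (1 - Q f) ^ K₀
        ≤ (K₀ : ℝ) * (1 - Pstar f) ^ (K₀ - 1) * (Q f - Pstar f) := by
      have : (1 - Pstar f) - (1 - Q f) = Q f - Pstar f := by ring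
      rw [← this]; exact htan
    calc Pr f * (1 - (1 - Q f) ^ K₀) - Pr f * (1 - (1 - Pstar f) ^ K₀)
        = Pr f * ((1 - Pstar f) ^ K₀ - (1 - Q f) ^ K₀) := by ring
      _ ≤ Pr f * ((K₀ : ℝ) * (1 - Pstar f) ^ (K₀ - 1) * (Q f - Pstar f)) :=
          mul_le_mul_of_nonneg_left hkey (hPrpos f).le
      _ = g f * (Q f - Pstar f) := by simp only [hg]; ring
  have := Finset.sum_le_sum fun f (_ : f ∈ Finset.univ) => hmain f
  rw [Finset.sum_sub_distrib] at this
  linarith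
end

section
/- Let m ≥ 1 and let z_1 ≥ z_2 ≥ … ≥ z_m > 0 be a nonincreasing sequence of positive reals. For k ∈ {1,…,m} define ν_k = (k−1)/(∑_{j=1}^k z_j^{−1}), and let m* = max{ k ∈ {1,…,m} : z_k > ν_k } (this set contains k = 1, so m* is well defined). Set ν = ν_{m*} = (m*−1)/(∑_{j=1}^{m*} z_j^{−1}). Then: (i) for every f ≤ m*, 0 < 1 − ν/z_f ≤ 1; (ii) for every f with m* < f ≤ m, 1 − ν/z_f ≤ 0; and (iii) ∑_{f=1}^m max(1 − ν/z_f, 0) = 1, i.e., P*(f) = [1 − ν/z_f]^+ is a probability mass function supported exactly on {1,…,m*}. -/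
/-!
With `S k = ∑_{j=1}^k (z j)⁻¹`, the levels `ν k = (k - 1) / S k` satisfy
`ν (k + 1) = ((k - 1) + 1) / (S k + 1 / z (k + 1))`, the mediant of `ν k = (k - 1) / S k` and
`z (k + 1) = 1 / (1 / z (k + 1))`. Hence as long as `z (k + 1) ≤ ν (k + 1)`, the level
cannot rise: `ν (k + 1) ≤ ν k`. Past `m*` this always holds, so `z f ≤ ν f ≤ ν m*` there,
while below `m*` monotonicity of `z` gives `ν m* < z m* ≤ z f`. On `{1,…,m*}` the masses
sum to `m* - ν m* · S m* = m* - (m* - 1) = 1`.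
-/

open Finset

section Mediant

variable {K : Type*} [Field K] [LinearOrder K] [IsStrictOrderedRing K] {a b c d : K}

theorem add_div_add_le_div_of_div_le (hb : 0 < b) (hd : 0 < d)
    (h : c / d ≤ (a + c) / (b + d)) : (a + c) / (b + d) ≤ a / b := by
  rw [div_le_div_iff₀ hd (add_pos hb hd)] at h
  rw [div_le_div_iff₀ (add_pos hb hd) hb]
  linarith

end Mediant

noncomputable def waterLevel (z : ℕ → ℝ) (k : ℕ) : ℝ :=
  ((k : ℝ) - 1) / ∑ j ∈ Icc 1 k, (z j)⁻¹

namespace waterLevel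

variable {z : ℕ → ℝ} {m n k : ℕ}

theorem sum_inv_pos (hz : ∀ j, 1 ≤ j → j ≤ k → 0 < z j) (hk : 1 ≤ k) :
    0 < ∑ j ∈ Icc 1 k, (z j)⁻¹ :=
  sum_pos (fun j hj => inv_pos.mpr (hz j (mem_Icc.mp hj).1 (mem_Icc.mp hj).2))
    ⟨1, mem_Icc.mpr ⟨le_rfl, hk⟩⟩

theorem nonneg (hz : ∀ j, 1 ≤ j → j ≤ k → 0 < z j) (hk : 1 ≤ k) : 0 ≤ waterLevel z k :=
  div_nonneg (sub_nonneg.mpr (by exact_mod_cast hk)) (sum_inv_pos hz hk).le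

theorem mul_sum_inv (hz : ∀ j, 1 ≤ j → j ≤ k → 0 < z j) (hk : 1 ≤ k) :
    waterLevel z k * ∑ j ∈ Icc 1 k, (z j)⁻¹ = k - 1 :=
  div_mul_cancel₀ _ (sum_inv_pos hz hk).ne'

theorem succ_le (hz : ∀ j, 1 ≤ j → j ≤ k + 1 → 0 < z j) (hk : 1 ≤ k)
    (hfull : z (k + 1) ≤ waterLevel z (k + 1)) : waterLevel z (k + 1) ≤ waterLevel z k := by
  have hS := sum_inv_pos (fun j hj hjk => hz j hj (hjk.trans k.le_succ)) hk
  have hzk := inv_pos.mpr (hz (k + 1) le_add_self le_rfl)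
  have hsucc : waterLevel z (k + 1) =
      ((k - 1 : ℝ) + 1) / (∑ j ∈ Icc 1 k, (z j)⁻¹ + (z (k + 1))⁻¹) := by
    rw [waterLevel, sum_Icc_succ_top le_add_self]
    push_cast
    ring
  rw [hsucc] at hfull ⊢
  exact add_div_add_le_div_of_div_le hS hzk (by rwa [one_div, inv_inv])

theorem le_of_full (hz : ∀ j, 1 ≤ j → j ≤ m → 0 < z j) (hn : 1 ≤ n)
    (hfull : ∀ k, n < k → k ≤ m → z k ≤ waterLevel z k) :
    ∀ f, n ≤ f → f ≤ m → waterLevel z f ≤ waterLevel z n := by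
  intro f hnf
  induction f, hnf using Nat.le_induction with
  | base => exact fun _ => le_rfl
  | succ k hnk ih =>
    intro hkm
    have hstep := succ_le (fun j hj hjk => hz j hj (hjk.trans hkm)) (hn.trans hnk)
      (hfull (k + 1) (Nat.lt_succ_of_le hnk) hkm)
    exact hstep.trans (ih (k.le_succ.trans hkm))

theorem sum_one_sub_div (hz : ∀ j, 1 ≤ j → j ≤ n → 0 < z j) (hn : 1 ≤ n) :
    ∑ f ∈ Icc 1 n, (1 - waterLevel z n / z f) = 1 := by
  simp only [sum_sub_distrib, sum_const, Nat.card_Icc, div_eq_mul_inv, ← mul_sum,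
    mul_sum_inv hz hn]
  simp

end waterLevel

theorem waterfilling_pmf_general
    (m : ℕ) (z : ℕ → ℝ)
    (hzpos : ∀ f, 1 ≤ f → f ≤ m → 0 < z f)
    (hzmono : ∀ i j, 1 ≤ i → i ≤ j → j ≤ m → z j ≤ z i)
    (νk : ℕ → ℝ)
    (hνk : ∀ k, νk k = ((k : ℝ) - 1) / ∑ j ∈ Finset.Icc 1 k, (z j)⁻¹)
    (mstar : ℕ)
    (hmem : mstar ∈ (Finset.Icc 1 m).filter fun k => νk k < z k)
    (hmax : ∀ k ∈ (Finset.Icc 1 m).filter fun k => νk k < z k, k ≤ mstar)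
    (ν : ℝ) (hν : ν = νk mstar) :
    (∀ f, 1 ≤ f → f ≤ mstar → 0 < 1 - ν / z f ∧ 1 - ν / z f ≤ 1) ∧
    (∀ f, mstar < f → f ≤ m → 1 - ν / z f ≤ 0) ∧
    (∑ f ∈ Finset.Icc 1 m, max (1 - ν / z f) 0 = 1) := by
  obtain ⟨hmstar, hlevel⟩ := mem_filter.mp hmem
  obtain ⟨h1, hmstar_m⟩ := mem_Icc.mp hmstar
  obtain rfl : νk = waterLevel z := funext hνk
  subst hν
  have hz : ∀ f, 1 ≤ f → f ≤ mstar → 0 < z f := fun f hf hfm => hzpos f hf (hfm.trans hmstar_m)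
  have hpos : ∀ f, 1 ≤ f → f ≤ mstar →
      0 < 1 - waterLevel z mstar / z f ∧ 1 - waterLevel z mstar / z f ≤ 1 := by
    intro f hf hfm
    have hzf := hz f hf hfm
    refine ⟨?_, sub_le_self _ (div_nonneg (waterLevel.nonneg hz h1) hzf.le)⟩
    rw [sub_pos, div_lt_one hzf]
    exact hlevel.trans_le (hzmono f mstar hf hfm hmstar_m)
  have hfull : ∀ k, mstar < k → k ≤ m → z k ≤ waterLevel z k := fun k hk hkm =>
    not_lt.mp fun h => (hmax k (mem_filter.mpr ⟨mem_Icc.mpr ⟨h1.trans hk.le, hkm⟩, h⟩)).not_gt hk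
  have hnonpos : ∀ f, mstar < f → f ≤ m → 1 - waterLevel z mstar / z f ≤ 0 := by
    intro f hf hfm
    rw [sub_nonpos, one_le_div (hzpos f (h1.trans hf.le) hfm)]
    exact (hfull f hf hfm).trans (waterLevel.le_of_full hzpos h1 hfull f hf.le hfm)
  refine ⟨hpos, hnonpos, ?_⟩
  rw [← sum_subset (Icc_subset_Icc_right hmstar_m) fun f hf hf' =>
    max_eq_right (hnonpos f (by rw [mem_Icc] at hf hf'; omega) (mem_Icc.mp hf).2)]
  rw [sum_congr rfl fun f hf => max_eq_left (hpos f (mem_Icc.mp hf).1 (mem_Icc.mp hf).2).1.le]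
  exact waterLevel.sum_one_sub_div hz h1

/-- **The water-filling constant makes `P*` a pmf.**
Let `z 1 ≥ z 2 ≥ … ≥ z m > 0`, let `νk k = (k−1)/∑_{j=1}^k (z j)⁻¹`, let `m*` be the largest
`k ∈ {1,…,m}` with `z k > νk k` (the set contains `k = 1`), and set `ν = νk m*`.  Then
(i) `0 < 1 − ν / z f ≤ 1` for `f ≤ m*`; (ii) `1 − ν / z f ≤ 0` for `m* < f ≤ m`;
(iii) `∑_{f=1}^m [1 − ν / z f]⁺ = 1`, i.e. `P* f = [1 − ν / z f]⁺` is a pmf supported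
exactly on `{1,…,m*}`. -/
theorem waterfilling_pmf
    (m : ℕ) (hm : 1 ≤ m) (z : ℕ → ℝ)
    (hzpos : ∀ f, 1 ≤ f → f ≤ m → 0 < z f)
    (hzmono : ∀ i j, 1 ≤ i → i ≤ j → j ≤ m → z j ≤ z i)
    (νk : ℕ → ℝ)
    (hνk : ∀ k, νk k = ((k : ℝ) - 1) / ∑ j ∈ Finset.Icc 1 k, (z j)⁻¹)
    (mstar : ℕ)
    (hmem : mstar ∈ (Finset.Icc 1 m).filter fun k => νk k < z k)
    (hmax : ∀ k ∈ (Finset.Icc 1 m).filter fun k => νk k < z k, k ≤ mstar)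
    (ν : ℝ) (hν : ν = νk mstar) :
    (∀ f, 1 ≤ f → f ≤ mstar → 0 < 1 - ν / z f ∧ 1 - ν / z f ≤ 1) ∧
    (∀ f, mstar < f → f ≤ m → 1 - ν / z f ≤ 0) ∧
    (∑ f ∈ Finset.Icc 1 m, max (1 - ν / z f) 0 = 1) :=
  waterfilling_pmf_general m z hzpos hzmono νk hνk mstar hmem hmax ν hν
end

section
/- Let m ≥ 1, let P_r and P_c be probability mass functions on {1,…,m}, and let N ≥ 1, M ≥ 1 be integers. On a probability space carry a random request X distributed according to P_r, and random variables C_{j,s} for j ∈ {1,…,N}, s ∈ {1,…,M} (the s-th cached file of the j-th other user), each distributed according to P_c, with X and all the C_{j,s} mutually independent. Then the probability that the requested file is cached by at least one of the N other users satisfies P(∃ j ≤ N, ∃ s ≤ M : C_{j,s} = X) = ∑_{f=1}^m P_r(f)·(1 − (1 − P_c(f))^{N·M}). -/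
/-!
Split the hit event according to the requested file `f`. Given `X = f`, a miss means that
none of the `N·M` independent cached files equals `f`, which has probability
`(1 - P_c f) ^ (N·M)`; independence of `X` from the caches turns this into
`P(X = f ∧ hit) = P_r f · (1 - (1 - P_c f) ^ (N·M))`, and the events for different `f` are
disjoint. The maps `X` and `C j s` need not be measurable; their level sets are still
null-measurable because their measures add up to `1`.
-/

open MeasureTheory ProbabilityTheory

namespace MeasureTheory

variable {Ω : Type*} [MeasurableSpace Ω] {μ : Measure Ω} [IsFiniteMeasure μ]

theorem nullMeasurableSet_of_measure_add_measure_compl_le {s : Set Ω}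
    (h : μ s + μ sᶜ ≤ μ Set.univ) : NullMeasurableSet s μ := by
  set t := (toMeasurable μ sᶜ)ᶜ
  have ht : MeasurableSet t := (measurableSet_toMeasurable μ sᶜ).compl
  have hts : t ⊆ s := Set.compl_subset_comm.mp (subset_toMeasurable μ sᶜ)
  have hst : μ s ≤ μ t := by
    rw [measure_compl (measurableSet_toMeasurable μ sᶜ) (measure_ne_top μ _),
      measure_toMeasurable]
    exact ENNReal.le_sub_of_add_le_right (measure_ne_top μ _) h
  exact ht.nullMeasurableSet.congr
    (ae_eq_of_subset_of_measure_ge hts hst ht.nullMeasurableSet (measure_ne_top μ _))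

theorem nullMeasurableSet_eq_of_sum_measure_le {α : Type*} [Fintype α] {Y : Ω → α}
    (h : ∑ a, μ {ω | Y ω = a} ≤ μ Set.univ) (a : α) : NullMeasurableSet {ω | Y ω = a} μ := by
  classical
  refine nullMeasurableSet_of_measure_add_measure_compl_le (le_trans ?_ h)
  have hcompl : {ω | Y ω = a}ᶜ = ⋃ b ∈ Finset.univ.erase a, {ω | Y ω = b} := by
    ext ω; simp [eq_comm]
  rw [← Finset.add_sum_erase _ _ (Finset.mem_univ a), hcompl]
  gcongr
  exact measure_biUnion_finset_le _ _

end MeasureTheory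

namespace ProbabilityTheory

variable {Ω ι β : Type*} [MeasurableSpace Ω] {μ : Measure Ω} [Fintype ι]
  [MeasurableSpace β] [MeasurableSingletonClass β] {Y : Option ι → Ω → β}

theorem iIndepFun.measure_eq_and_forall_ne (hY : iIndepFun Y μ) (b : β) :
    μ {ω | Y none ω = b ∧ ∀ i, Y (some i) ω ≠ b} =
      μ {ω | Y none ω = b} * ∏ i, μ {ω | Y (some i) ω ≠ b} := by
  set s : Option ι → Set Ω := fun i =>
    Option.elim i {ω | Y none ω = b} fun i => {ω | Y (some i) ω ≠ b}
  have hs : ∀ i, MeasurableSet[(inferInstance : MeasurableSpace β).comap (Y i)] (s i) := by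
    rintro (_ | i)
    · exact ⟨{b}, measurableSet_singleton b, rfl⟩
    · exact ⟨{b}ᶜ, (measurableSet_singleton b).compl, rfl⟩
  calc μ {ω | Y none ω = b ∧ ∀ i, Y (some i) ω ≠ b} = μ (⋂ i, s i) := by
        congr 1; ext ω; simp [s, Option.forall]
    _ = _ := by rw [hY.meas_iInter hs, Fintype.prod_option]; rfl

theorem iIndepFun.measure_eq_and_exists_eq [IsProbabilityMeasure μ] (hY : iIndepFun Y μ) (b : β)
    (hnm : ∀ i, NullMeasurableSet {ω | Y (some i) ω = b} μ) :
    μ {ω | Y none ω = b ∧ ∃ i, Y (some i) ω = b} =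
      μ {ω | Y none ω = b} * (1 - ∏ i, (1 - μ {ω | Y (some i) ω = b})) := by
  have hD : NullMeasurableSet {ω | ∃ i, Y (some i) ω = b} μ := by
    simpa only [Set.ofPred_exists] using NullMeasurableSet.iUnion hnm
  have hsplit := ENNReal.eq_sub_of_add_eq (measure_ne_top μ _)
    (measure_inter_add_sdiff₀ {ω | Y none ω = b} hD)
  have hmiss : μ ({ω | Y none ω = b} \ {ω | ∃ i, Y (some i) ω = b}) =
      μ {ω | Y none ω = b} * ∏ i, (1 - μ {ω | Y (some i) ω = b}) := by
    simp_rw [← prob_compl_eq_one_sub₀ (hnm _)]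
    convert hY.measure_eq_and_forall_ne b using 2
    · ext ω; simp
    · rfl
  rw [ENNReal.mul_sub fun _ _ => measure_ne_top μ _, mul_one, ← hmiss]
  exact hsplit

end ProbabilityTheory

theorem ENNReal.sum_ofReal_eq_one {α : Type*} [Fintype α] {P : α → ℝ} (hP : ∀ a, 0 ≤ P a)
    (hsum : ∑ a, P a = 1) : ∑ a, ENNReal.ofReal (P a) = 1 := by
  rw [← ENNReal.ofReal_sum_of_nonneg fun a _ => hP a, hsum, ENNReal.ofReal_one]

theorem ENNReal.ofReal_mul_one_sub_one_sub_pow {p q : ℝ} (hp : 0 ≤ p) (hq₀ : 0 ≤ q)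
    (hq₁ : q ≤ 1) (n : ℕ) :
    ENNReal.ofReal p * (1 - (1 - ENNReal.ofReal q) ^ n) =
      ENNReal.ofReal (p * (1 - (1 - q) ^ n)) := by
  have hq : 1 - ENNReal.ofReal q = ENNReal.ofReal (1 - q) := by
    rw [ENNReal.ofReal_sub _ hq₀, ENNReal.ofReal_one]
  rw [hq, ← ENNReal.ofReal_pow (sub_nonneg.2 hq₁), ← ENNReal.ofReal_one,
    ← ENNReal.ofReal_sub _ (pow_nonneg (sub_nonneg.2 hq₁) n), ← ENNReal.ofReal_mul hp]

theorem random_caching_hit_probability_general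
    {Ω : Type*} [MeasurableSpace Ω] (μ : Measure Ω) [IsProbabilityMeasure μ]
    (m N M : ℕ)
    (Pr Pc : Fin m → ℝ)
    (hPr : ∀ f, 0 ≤ Pr f) (hPrsum : ∑ f, Pr f = 1)
    (hPc : ∀ f, 0 ≤ Pc f) (hPcsum : ∑ f, Pc f = 1)
    (X : Ω → Fin m) (C : Fin N → Fin M → Ω → Fin m)
    (hindep : iIndepFun (m := fun _ : Option (Fin N × Fin M) => inferInstance)
      (fun i => Option.elim i X (fun p => C p.1 p.2)) μ)
    (hXdist : ∀ f, μ {ω | X ω = f} = ENNReal.ofReal (Pr f))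
    (hCdist : ∀ j s f, μ {ω | C j s ω = f} = ENNReal.ofReal (Pc f)) :
    μ {ω | ∃ j, ∃ s, C j s ω = X ω} =
      ENNReal.ofReal (∑ f, Pr f * (1 - (1 - Pc f) ^ (N * M))) := by
  have hPc_le_one : ∀ f, Pc f ≤ 1 := fun f =>
    hPcsum ▸ Finset.single_le_sum (fun g _ => hPc g) (Finset.mem_univ f)
  have hX : ∀ f, NullMeasurableSet {ω | X ω = f} μ := nullMeasurableSet_eq_of_sum_measure_le <| by
    simp only [hXdist, ENNReal.sum_ofReal_eq_one hPr hPrsum, measure_univ, le_refl]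
  have hC : ∀ j s f, NullMeasurableSet {ω | C j s ω = f} μ := fun j s =>
    nullMeasurableSet_eq_of_sum_measure_le <| by
      simp only [hCdist, ENNReal.sum_ofReal_eq_one hPc hPcsum, measure_univ, le_refl]
  set hit : Fin m → Set Ω := fun f => {ω | X ω = f ∧ ∃ p : Fin N × Fin M, C p.1 p.2 ω = f}
  have hit_eq : ∀ f, μ (hit f) = ENNReal.ofReal (Pr f * (1 - (1 - Pc f) ^ (N * M))) := fun f =>
    (hindep.measure_eq_and_exists_eq f fun p => hC p.1 p.2 f).trans <| by
      simp [hXdist, hCdist, ENNReal.ofReal_mul_one_sub_one_sub_pow (hPr f) (hPc f) (hPc_le_one f)]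
  have hit_nm : ∀ f, NullMeasurableSet (hit f) μ := fun f =>
    (hX f).inter (show NullMeasurableSet {ω | ∃ p : Fin N × Fin M, C p.1 p.2 ω = f} μ by
      simpa only [Set.ofPred_exists] using .iUnion fun p => hC p.1 p.2 f)
  have hit_disjoint : Pairwise (Function.onFun (AEDisjoint μ) hit) := fun f g hfg =>
    (Set.disjoint_left.2 fun ω hf hg => hfg (hf.1.symm.trans hg.1)).aedisjoint
  have hit_iUnion : {ω | ∃ j, ∃ s, C j s ω = X ω} = ⋃ f, hit f := by
    ext ω; simp [hit]
  rw [hit_iUnion, measure_iUnion₀ hit_disjoint hit_nm, tsum_fintype,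
    Finset.sum_congr rfl fun f _ => hit_eq f, ENNReal.ofReal_sum_of_nonneg]
  exact fun f _ => mul_nonneg (hPr f) (sub_nonneg.2 (pow_le_one₀ (sub_nonneg.2 (hPc_le_one f))
    (sub_le_self _ (hPc f))))

/-- **Cache-hit probability under independent random caching.**
A request `X ~ P_r` and the `N·M` cached files `C j s ~ P_c` (the `s`-th cached file of the
`j`-th other user) are mutually independent, all taking values in `{1,…,m}`.  Then the
probability that the requested file is cached by at least one of the `N` other users is
`∑ f, P_r f * (1 − (1 − P_c f) ^ (N·M))`. -/
theorem random_caching_hit_probability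
    {Ω : Type*} [MeasurableSpace Ω] (μ : Measure Ω) [IsProbabilityMeasure μ]
    (m N M : ℕ) (hm : 1 ≤ m) (hN : 1 ≤ N) (hM : 1 ≤ M)
    (Pr Pc : Fin m → ℝ)
    (hPr : ∀ f, 0 ≤ Pr f) (hPrsum : ∑ f, Pr f = 1)
    (hPc : ∀ f, 0 ≤ Pc f) (hPcsum : ∑ f, Pc f = 1)
    (X : Ω → Fin m) (C : Fin N → Fin M → Ω → Fin m)
    (hindep : iIndepFun (m := fun _ : Option (Fin N × Fin M) => inferInstance)
      (fun i => Option.elim i X (fun p => C p.1 p.2)) μ)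
    (hXdist : ∀ f, μ {ω | X ω = f} = ENNReal.ofReal (Pr f))
    (hCdist : ∀ j s f, μ {ω | C j s ω = f} = ENNReal.ofReal (Pc f)) :
    μ {ω | ∃ j, ∃ s, C j s ω = X ω} =
      ENNReal.ofReal (∑ f, Pr f * (1 - (1 - Pc f) ^ (N * M))) :=
  random_caching_hit_probability_general μ m N M Pr Pc hPr hPrsum hPc hPcsum X C hindep hXdist
    hCdist
end

section
/- Let U (users), H (helpers), and F (files) be finite sets, let w : U × F → ℝ be nonnegative weights, let d0 : U → ℝ give each user's base-station download delay, and let d : U × H → ℝ give the user–helper delays. For a set S ⊆ H × F of (helper, file) placements, define the expected delay saving g(S) = ∑_{u∈U} ∑_{f∈F} w(u,f)·( d0(u) − min( {d0(u)} ∪ { d(u,h) : h ∈ H, (h,f) ∈ S } ) ). Then g is submodular: for all S ⊆ T ⊆ H × F and every e ∈ (H × F) \ T, g(S ∪ {e}) − g(S) ≥ g(T ∪ {e}) − g(T); equivalently, for all A, B ⊆ H × F, g(A) + g(B) ≥ g(A ∪ B) + g(A ∩ B). -/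
/-- The expected delay saving of a femtocaching placement `S ⊆ H × F`:
`g S = ∑ u, ∑ f, w u f * (d0 u − min({d0 u} ∪ {d u h : (h,f) ∈ S}))`,
where a user `u` requesting file `f` downloads it from the source (a helper `h` with
`(h,f) ∈ S`, or the base station) of smallest delay. -/
noncomputable def delaySaving {U H F : Type*} [Fintype U] [Fintype F] [DecidableEq F]
    (w : U → F → ℝ) (d0 : U → ℝ) (d : U → H → ℝ) (S : Finset (H × F)) : ℝ :=
  ∑ u, ∑ f, w u f *
    (d0 u - (insert (d0 u) ((S.filter (fun p => p.2 = f)).image (fun p => d u p.1))).min'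
      (Finset.insert_nonempty _ _))

/-- Auxiliary: the effective min delay of user `u` for file `f` under placement `S`. -/
noncomputable def mval {U H F : Type*} [DecidableEq F]
    (d0 : U → ℝ) (d : U → H → ℝ) (u : U) (f : F) (S : Finset (H × F)) : ℝ :=
  (insert (d0 u) ((S.filter (fun p => p.2 = f)).image (fun p => d u p.1))).min'
      (Finset.insert_nonempty _ _)

lemma mval_anti {U H F : Type*} [DecidableEq F]
    (d0 : U → ℝ) (d : U → H → ℝ) (u : U) (f : F) {S T : Finset (H × F)} (h : S ⊆ T) :
    mval d0 d u f T ≤ mval d0 d u f S :=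
  Finset.min'_subset _ (Finset.insert_subset_insert _
    (Finset.image_subset_image (Finset.filter_subset_filter _ h)))

lemma mval_union {U H F : Type*} [DecidableEq F] [DecidableEq H]
    (d0 : U → ℝ) (d : U → H → ℝ) (u : U) (f : F) (A B : Finset (H × F)) :
    mval d0 d u f (A ∪ B) = min (mval d0 d u f A) (mval d0 d u f B) := by
  unfold mval
  simp only [Finset.filter_union, Finset.image_union]
  have hset : insert (d0 u) (((A.filter (fun p => p.2 = f)).image (fun p => d u p.1)) ∪
      ((B.filter (fun p => p.2 = f)).image (fun p => d u p.1))) =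
      (insert (d0 u) ((A.filter (fun p => p.2 = f)).image (fun p => d u p.1))) ∪
      (insert (d0 u) ((B.filter (fun p => p.2 = f)).image (fun p => d u p.1))) := by
    simp [Finset.insert_union, Finset.union_insert]
  simp only [hset]
  exact Finset.min'_union (Finset.insert_nonempty _ _) (Finset.insert_nonempty _ _)

lemma mval_insert {U H F : Type*} [DecidableEq F] [DecidableEq H]
    (d0 : U → ℝ) (d : U → H → ℝ) (u : U) (f : F) (e : H × F) (S : Finset (H × F)) :
    mval d0 d u f (insert e S) =
      if e.2 = f then min (d u e.1) (mval d0 d u f S) else mval d0 d u f S := by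
  unfold mval
  split_ifs with h
  · have hset : insert (d0 u) (((insert e S).filter (fun p => p.2 = f)).image (fun p => d u p.1))
        = insert (d u e.1) (insert (d0 u) ((S.filter (fun p => p.2 = f)).image (fun p => d u p.1))) := by
      rw [Finset.filter_insert, if_pos h, Finset.image_insert, Finset.insert_comm]
    simp only [hset]
    rw [Finset.min'_insert _ _ (Finset.insert_nonempty _ _), min_comm]
  · have hset : ((insert e S).filter (fun p => p.2 = f)) = S.filter (fun p => p.2 = f) := by
      rw [Finset.filter_insert, if_neg h]
    simp only [hset]

/-- The difference of delay savings as a double sum of min-value differences. -/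
lemma delaySaving_sub {U H F : Type*} [Fintype U] [Fintype F] [DecidableEq F]
    (w : U → F → ℝ) (d0 : U → ℝ) (d : U → H → ℝ) (X Y : Finset (H × F)) :
    delaySaving w d0 d X - delaySaving w d0 d Y =
      ∑ u, ∑ f, w u f * (mval d0 d u f Y - mval d0 d u f X) := by
  unfold delaySaving mval
  rw [← Finset.sum_sub_distrib]
  refine Finset.sum_congr rfl fun u _ => ?_
  rw [← Finset.sum_sub_distrib]
  exact Finset.sum_congr rfl fun f _ => by ring

/-- **Submodularity of the femtocaching delay-saving objective.**
For nonnegative popularity weights `w`, the expected delay saving `g` has diminishing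
returns: for `S ⊆ T` and `e ∉ T`, `g (S ∪ {e}) − g S ≥ g (T ∪ {e}) − g T`; equivalently,
`g A + g B ≥ g (A ∪ B) + g (A ∩ B)` for all `A, B`. -/
theorem delaySaving_submodular
    {U H F : Type*} [Fintype U] [Fintype F] [DecidableEq H] [DecidableEq F]
    (w : U → F → ℝ) (hw : ∀ u f, 0 ≤ w u f) (d0 : U → ℝ) (d : U → H → ℝ) :
    (∀ S T : Finset (H × F), S ⊆ T → ∀ e ∉ T,
      delaySaving w d0 d (insert e T) - delaySaving w d0 d T ≤
        delaySaving w d0 d (insert e S) - delaySaving w d0 d S) ∧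
    (∀ A B : Finset (H × F),
      delaySaving w d0 d (A ∪ B) + delaySaving w d0 d (A ∩ B) ≤
        delaySaving w d0 d A + delaySaving w d0 d B) := by
  constructor
  · intro S T hST e _
    rw [delaySaving_sub, delaySaving_sub]
    refine Finset.sum_le_sum fun u _ => Finset.sum_le_sum fun f _ => ?_
    refine mul_le_mul_of_nonneg_left ?_ (hw u f)
    rw [mval_insert, mval_insert]
    have hm := mval_anti d0 d u f hST
    split_ifs with h
    · rcases le_total (d u e.1) (mval d0 d u f S) with h1 | h1 <;>
        rcases le_total (d u e.1) (mval d0 d u f T) with h2 | h2 <;>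
        simp [min_eq_left, min_eq_right, h1, h2] <;> linarith
    · linarith
  · intro A B
    have key : delaySaving w d0 d (A ∪ B) - delaySaving w d0 d A ≤
        delaySaving w d0 d B - delaySaving w d0 d (A ∩ B) := by
      rw [delaySaving_sub, delaySaving_sub]
      refine Finset.sum_le_sum fun u _ => Finset.sum_le_sum fun f _ => ?_
      refine mul_le_mul_of_nonneg_left ?_ (hw u f)
      rw [mval_union]
      have h1 := mval_anti d0 d u f (Finset.inter_subset_left (s₁ := A) (s₂ := B))
      have h2 := mval_anti d0 d u f (Finset.inter_subset_right (s₁ := A) (s₂ := B))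
      rcases le_total (mval d0 d u f A) (mval d0 d u f B) with h | h <;>
        simp [min_eq_left, min_eq_right, h] <;> linarith
    linarith
end

section
/- Let ℓ > 0 (the cluster side length), Δ > 0 (the interference-control parameter), and set r = √2·ℓ (the worst-case in-cluster transmission range) and k₀ = ⌈√2·(1+Δ)⌉ + 1, so that the reuse factor is K = k₀². Partition the plane ℝ² into half-open squares S_{(i,j)} = [iℓ, (i+1)ℓ) × [jℓ, (j+1)ℓ) indexed by (i,j) ∈ ℤ². Then: (a) any two points in the same square are at Euclidean distance at most r; and (b) if (i,j) ≠ (i′,j′) with i ≡ i′ (mod k₀) and j ≡ j′ (mod k₀), then every point p ∈ S_{(i,j)} and every point q ∈ S_{(i′,j′)} satisfy dist(p,q) > (1+Δ)·r. Consequently, under spatial time-division reuse with parameter K = (⌈√2(1+Δ)⌉+1)², a transmitter in any concurrently active cluster is at distance greater than (1+Δ)r from every receiver in any other concurrently active cluster. -/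
lemma coord_sep (ℓ : ℝ) (hℓ : 0 < ℓ) (k₀ : ℕ) (i i' : ℤ) (hne : i ≠ i')
    (hmod : i ≡ i' [ZMOD (k₀ : ℤ)]) (x y : ℝ)
    (hx1 : (i : ℝ) * ℓ ≤ x) (hx2 : x < ((i : ℝ) + 1) * ℓ)
    (hy1 : (i' : ℝ) * ℓ ≤ y) (hy2 : y < ((i' : ℝ) + 1) * ℓ) :
    ((k₀ : ℝ) - 1) * ℓ < |x - y| := by
  have hdvd : (k₀ : ℤ) ∣ (i' - i) := hmod.dvd
  have hpos : 0 < |i' - i| := abs_pos.mpr (sub_ne_zero.mpr (Ne.symm hne))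
  have habs : (k₀ : ℤ) ≤ |i' - i| := Int.le_of_dvd hpos ((dvd_abs _ _).mpr hdvd)
  rcases abs_cases (i' - i) with ⟨h, _⟩ | ⟨h, _⟩
  · -- i' - i ≥ k₀, so y - x > (k₀-1)ℓ
    have h1 : (k₀ : ℝ) ≤ (i' : ℝ) - i := by exact_mod_cast h ▸ habs
    have h2 : ((k₀ : ℝ) - 1) * ℓ ≤ ((i' : ℝ) - i - 1) * ℓ :=
      mul_le_mul_of_nonneg_right (by linarith) hℓ.le
    have h3 : ((i' : ℝ) - i - 1) * ℓ < y - x := by nlinarith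
    calc ((k₀ : ℝ) - 1) * ℓ < y - x := by linarith
      _ ≤ |x - y| := by rw [abs_sub_comm]; exact le_abs_self _
  · have h1 : (k₀ : ℝ) ≤ (i : ℝ) - i' := by
      have : (k₀ : ℤ) ≤ i - i' := by omega
      exact_mod_cast this
    have h2 : ((k₀ : ℝ) - 1) * ℓ ≤ ((i : ℝ) - i' - 1) * ℓ :=
      mul_le_mul_of_nonneg_right (by linarith) hℓ.le
    have h3 : ((i : ℝ) - i' - 1) * ℓ < x - y := by nlinarith
    calc ((k₀ : ℝ) - 1) * ℓ < x - y := by linarith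
      _ ≤ |x - y| := le_abs_self _

/-- **The reuse factor `K = (⌈√2(1+Δ)⌉+1)²` satisfies the protocol-model constraint.**
Tile the plane into half-open squares `S (i,j) = [iℓ,(i+1)ℓ) × [jℓ,(j+1)ℓ)` of side `ℓ > 0`,
set `r = √2 ℓ` (the worst-case in-cluster transmission range) and `k₀ = ⌈√2(1+Δ)⌉ + 1`.
Then (a) any two points of the same square are at distance at most `r`; and
(b) if `(i,j) ≠ (i',j')` with `i ≡ i'` and `j ≡ j'` (mod `k₀`) — i.e. the two squares are
simultaneously active clusters under spatial reuse `K = k₀²` — then every point of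
`S (i,j)` is at distance greater than `(1+Δ) r` from every point of `S (i',j')`;
in particular a transmitter of any concurrently active cluster is farther than `(1+Δ) r`
from every receiver of any other concurrently active cluster. -/
theorem reuse_factor_protocol_model
    (ℓ Δ : ℝ) (hℓ : 0 < ℓ) (hΔ : 0 < Δ)
    (r : ℝ) (hr : r = Real.sqrt 2 * ℓ)
    (k₀ : ℕ) (hk₀ : k₀ = ⌈Real.sqrt 2 * (1 + Δ)⌉₊ + 1)
    (inSq : ℤ → ℤ → EuclideanSpace ℝ (Fin 2) → Prop)
    (hinSq : ∀ i j p, inSq i j p ↔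
      ((i : ℝ) * ℓ ≤ p 0 ∧ p 0 < ((i : ℝ) + 1) * ℓ ∧
       (j : ℝ) * ℓ ≤ p 1 ∧ p 1 < ((j : ℝ) + 1) * ℓ)) :
    (∀ i j, ∀ p q : EuclideanSpace ℝ (Fin 2),
      inSq i j p → inSq i j q → dist p q ≤ r) ∧
    (∀ i j i' j', ∀ p q : EuclideanSpace ℝ (Fin 2),
      (i, j) ≠ (i', j') → i ≡ i' [ZMOD (k₀ : ℤ)] → j ≡ j' [ZMOD (k₀ : ℤ)] →
      inSq i j p → inSq i' j' q → (1 + Δ) * r < dist p q) := by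
  have hsqrt2 : (0:ℝ) ≤ Real.sqrt 2 := Real.sqrt_nonneg 2
  have hdist : ∀ p q : EuclideanSpace ℝ (Fin 2),
      dist p q = Real.sqrt ((p 0 - q 0) ^ 2 + (p 1 - q 1) ^ 2) := by
    intro p q
    rw [EuclideanSpace.dist_eq, Fin.sum_univ_two, Real.dist_eq, Real.dist_eq,
      sq_abs, sq_abs]
  -- key bound: (1+Δ)*r ≤ (k₀-1)*ℓ
  have hkey : (1 + Δ) * r ≤ ((k₀ : ℝ) - 1) * ℓ := by
    have hceil : Real.sqrt 2 * (1 + Δ) ≤ (⌈Real.sqrt 2 * (1 + Δ)⌉₊ : ℝ) :=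
      Nat.le_ceil _
    have hk : ((k₀ : ℝ) - 1) = (⌈Real.sqrt 2 * (1 + Δ)⌉₊ : ℝ) := by
      rw [hk₀]; push_cast; ring
    rw [hr, hk]
    nlinarith
  constructor
  · intro i j p q hp hq
    rw [hinSq] at hp hq
    obtain ⟨hp1, hp2, hp3, hp4⟩ := hp
    obtain ⟨hq1, hq2, hq3, hq4⟩ := hq
    rw [hdist, hr]
    have h1 : (p 0 - q 0) ^ 2 ≤ ℓ ^ 2 := by nlinarith
    have h2 : (p 1 - q 1) ^ 2 ≤ ℓ ^ 2 := by nlinarith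
    have : Real.sqrt ((p 0 - q 0) ^ 2 + (p 1 - q 1) ^ 2) ≤ Real.sqrt (2 * ℓ ^ 2) :=
      Real.sqrt_le_sqrt (by linarith)
    calc Real.sqrt ((p 0 - q 0) ^ 2 + (p 1 - q 1) ^ 2) ≤ Real.sqrt (2 * ℓ ^ 2) := this
      _ = Real.sqrt 2 * ℓ := by
          rw [Real.sqrt_mul (by norm_num), Real.sqrt_sq hℓ.le]
  · intro i j i' j' p q hne hmi hmj hp hq
    rw [hinSq] at hp hq
    obtain ⟨hp1, hp2, hp3, hp4⟩ := hp
    obtain ⟨hq1, hq2, hq3, hq4⟩ := hq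
    have hcases : i ≠ i' ∨ j ≠ j' := by
      by_contra hc
      push_neg at hc
      exact hne (by rw [hc.1, hc.2])
    have key : ∃ a : ℝ, ((k₀ : ℝ) - 1) * ℓ < |a| ∧
        |a| ≤ Real.sqrt ((p 0 - q 0) ^ 2 + (p 1 - q 1) ^ 2) := by
      rcases hcases with h | h
      · refine ⟨p 0 - q 0, coord_sep ℓ hℓ k₀ i i' h hmi _ _ hp1 hp2 hq1 hq2, ?_⟩
        rw [← Real.sqrt_sq_eq_abs]
        exact Real.sqrt_le_sqrt (by nlinarith [sq_nonneg (p 1 - q 1)])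
      · refine ⟨p 1 - q 1, coord_sep ℓ hℓ k₀ j j' h hmj _ _ hp3 hp4 hq3 hq4, ?_⟩
        rw [← Real.sqrt_sq_eq_abs]
        exact Real.sqrt_le_sqrt (by nlinarith [sq_nonneg (p 0 - q 0)])
    obtain ⟨a, ha1, ha2⟩ := key
    rw [hdist]
    calc (1 + Δ) * r ≤ ((k₀ : ℝ) - 1) * ℓ := hkey
      _ < |a| := ha1
      _ ≤ _ := ha2
end
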